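/- Let f : ℕ → ℝ be any function with f(k) ≥ 1 for all k and f(k) → ∞ as k → ∞, and set N⁺(k) = ⌈2^{k/2} · k^{3/2} · f(k)⌉. Then the proportion of 2-colorings c : {1,...,N⁺(k)} → {0,1} (out of the 2^{N⁺(k)} total) that contain a monochromatic k-term arithmetic progression tends to 1 as k → ∞. Equivalently, the probability that a uniformly random 2-coloring of {1,...,N⁺(k)} contains a monochromatic k-term arithmetic progression approaches 1 as k → ∞. -/

import Mathlib

/-- The `k`-term arithmetic progression `{a, a+d, ..., a+(k-1)d}` as a finite set. -/
def AP (a d k : ℕ) : Finset ℕ := (Finset.range k).image (fun i => a + i * d)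

/-- `P` is a `k`-term arithmetic progression contained in `{1, ..., n}`. -/
def IsKAP (n k : ℕ) (P : Finset ℕ) : Prop :=
  ∃ a d : ℕ, 1 ≤ a ∧ 1 ≤ d ∧ a + (k - 1) * d ≤ n ∧ P = AP a d k

/-- The coloring `c` of `{1, ..., n}` is constant on `P`. -/
def Mono {n : ℕ} (c : ↥(Finset.Icc 1 n) → Bool) (P : Finset ℕ) : Prop :=
  ∀ x y : ↥(Finset.Icc 1 n), (x : ℕ) ∈ P → (y : ℕ) ∈ P → c x = c y

/-- The coloring `c` of `{1, ..., n}` contains a monochromatic `k`-term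
arithmetic progression. -/
def HasMonoKAP (n k : ℕ) (c : ↥(Finset.Icc 1 n) → Bool) : Prop :=
  ∃ P : Finset ℕ, IsKAP n k P ∧ Mono c P

/-- `N⁺(k) = ⌈2^(k/2) k^(3/2) f(k)⌉`. -/
noncomputable def Nplus (f : ℕ → ℝ) (k : ℕ) : ℕ :=
  ⌈(2 : ℝ) ^ ((k : ℝ) / 2) * (k : ℝ) ^ ((3 : ℝ) / 2) * f k⌉₊

/-!
Second moment method. Put `D = ⌊n/k⌋`, `W = ⌊D/(2k)⌋` and take the progressions
`a, a + d, …, a + (k-1)d` with `1 ≤ a ≤ D - W < d ≤ D`. They lie in `{1, …, n}`, there are about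
`n²/k³` of them, and two of them share at most one point: equal differences force equal starts,
and for `d < d'` two common terms would give `I d = J d'` with `0 < J < I < k`, whence
`d ≤ (I - J) d = J (d' - d) < k W < d`. So the events "`P` is monochromatic" have probability
`p = 2^(1-k)` and are pairwise uncorrelated (`P(E ∩ E') ≤ p²`). By Cauchy–Schwarz,
`P(⋃ E) ≥ (∑ P(E))² / ∑∑ P(E ∩ E') ≥ 1 - 1/μ` with `μ = p · #family ≥ n² / (16 k³ 2^k)`,
and `n = N⁺(k)` makes `μ ≥ f(k)²/16 → ∞`.
-/

open Finset

theorem sq_sum_card_le_card_biUnion_mul {ι Ω : Type*} [DecidableEq Ω] (F : Finset ι)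
    (E : ι → Finset Ω) :
    (∑ i ∈ F, #(E i)) ^ 2 ≤ #(F.biUnion E) * ∑ i ∈ F, ∑ j ∈ F, #(E i ∩ E j) := by
  set U := F.biUnion E
  have hcard : ∀ S ⊆ U, #S = ∑ ω ∈ U, if ω ∈ S then 1 else 0 := fun S hS => by
    rw [← card_filter, filter_mem_eq_inter, inter_eq_right.mpr hS]
  have hsub : ∀ i ∈ F, E i ⊆ U := fun i hi => subset_biUnion_of_mem E hi
  have hsum : ∑ i ∈ F, #(E i) = ∑ ω ∈ U, ∑ i ∈ F, if ω ∈ E i then 1 else 0 := by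
    rw [sum_comm]
    exact sum_congr rfl fun i hi => hcard _ (hsub i hi)
  have hsum_sq : ∑ i ∈ F, ∑ j ∈ F, #(E i ∩ E j)
      = ∑ ω ∈ U, (∑ i ∈ F, if ω ∈ E i then 1 else 0) ^ 2 := by
    have hrow : ∀ i ∈ F, ∑ j ∈ F, #(E i ∩ E j)
        = ∑ ω ∈ U, ∑ j ∈ F, if ω ∈ E i ∩ E j then 1 else 0 := fun i hi => by
      rw [sum_comm]
      exact sum_congr rfl fun j _ => hcard _ (inter_subset_left.trans (hsub i hi))
    rw [sum_congr rfl hrow, sum_comm]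
    simp_rw [sq, sum_mul_sum, ite_zero_mul_ite_zero, mul_one, mem_inter]
  rw [hsum, hsum_sq]
  exact sq_sum_le_card_mul_sum_sq

theorem one_sub_one_div_le_card_biUnion_div {ι Ω : Type*} [DecidableEq Ω] (F : Finset ι)
    (E : ι → Finset Ω) {N p : ℝ} (hN : 0 < N) (hF : F.Nonempty) (hp : 0 < p)
    (hcard : ∀ i ∈ F, (#(E i) : ℝ) = p * N)
    (hcorr : ∀ i ∈ F, ∀ j ∈ F, i ≠ j → (#(E i ∩ E j) : ℝ) ≤ p ^ 2 * N) :
    1 - 1 / (#F * p) ≤ #(F.biUnion E) / N := by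
  classical
  set μ : ℝ := #F * p
  have hμ : 0 < μ := mul_pos (by exact_mod_cast hF.card_pos) hp
  have hsum : (∑ i ∈ F, #(E i) : ℝ) = μ * N := by
    rw [sum_congr rfl hcard, sum_const, nsmul_eq_mul, mul_assoc]
  have hrow : ∀ i ∈ F, (∑ j ∈ F, #(E i ∩ E j) : ℝ) ≤ p * N + μ * (p * N) := fun i hi => by
    rw [← add_sum_erase F _ hi, inter_self, hcard i hi]
    gcongr
    calc (∑ j ∈ F.erase i, #(E i ∩ E j) : ℝ) ≤ ∑ j ∈ F.erase i, p ^ 2 * N :=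
          sum_le_sum fun j hj => hcorr i hi j (mem_of_mem_erase hj) (ne_of_mem_erase hj).symm
      _ ≤ ∑ j ∈ F, p ^ 2 * N := sum_le_sum_of_subset_of_nonneg (erase_subset i F)
          fun _ _ _ => by positivity
      _ = μ * (p * N) := by rw [sum_const, nsmul_eq_mul]; ring
  have hsum_sq : (∑ i ∈ F, ∑ j ∈ F, #(E i ∩ E j) : ℝ) ≤ μ * N * (1 + μ) := by
    calc _ ≤ ∑ i ∈ F, (p * N + μ * (p * N)) := sum_le_sum hrow
      _ = μ * N * (1 + μ) := by rw [sum_const, nsmul_eq_mul]; ring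
  have hCS : (μ * N) ^ 2 ≤ #(F.biUnion E) * (μ * N * (1 + μ)) := by
    calc (μ * N) ^ 2 = (∑ i ∈ F, #(E i) : ℝ) ^ 2 := by rw [hsum]
      _ ≤ (#(F.biUnion E) * ∑ i ∈ F, ∑ j ∈ F, #(E i ∩ E j) : ℝ) := by
          exact_mod_cast sq_sum_card_le_card_biUnion_mul F E
      _ ≤ _ := by push_cast; gcongr
  have hmain : μ / (1 + μ) ≤ #(F.biUnion E) / N := by
    rw [div_le_div_iff₀ (by positivity) hN]
    nlinarith [mul_pos hμ hN]
  calc 1 - 1 / μ ≤ μ / (1 + μ) := by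
        rw [sub_le_iff_le_add, div_add_div _ _ (by positivity) hμ.ne', le_div_iff₀ (by positivity)]
        nlinarith
    _ ≤ _ := hmain

section Colorings

variable {α : Type*} [Fintype α] [DecidableEq α]

def monoColorings (Q : Finset α) : Finset (α → Bool) :=
  univ.filter fun c => ∀ x ∈ Q, ∀ y ∈ Q, c x = c y

theorem card_filter_forall_eq_mul_two_pow (Q : Finset α) (v : α → Bool) :
    #{c : α → Bool | ∀ x ∈ Q, c x = v x} * 2 ^ #Q = 2 ^ Fintype.card α := by
  have hpi : ({c | ∀ x ∈ Q, c x = v x} : Finset (α → Bool))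
      = Fintype.piFinset fun x => if x ∈ Q then {v x} else univ := by
    ext c
    simp only [mem_filter, mem_univ, true_and, Fintype.mem_piFinset]
    refine forall_congr' fun x => ?_
    split_ifs with hx <;> simp [hx]
  rw [hpi, Fintype.card_piFinset]
  simp only [apply_ite card, card_singleton, card_univ, Fintype.card_bool]
  rw [prod_ite, prod_const_one, one_mul, prod_const, filter_not, filter_mem_eq_inter, univ_inter,
    ← pow_add, card_univ_sdiff, Nat.sub_add_cancel (card_le_univ Q)]

theorem card_monoColorings_mul_two_pow {Q : Finset α} (hQ : Q.Nonempty) :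
    #(monoColorings Q) * 2 ^ #Q = 2 ^ (Fintype.card α + 1) := by
  obtain ⟨q, hq⟩ := hQ
  have hsplit : monoColorings Q
      = ({c | ∀ x ∈ Q, c x = true} : Finset (α → Bool))
        ∪ ({c | ∀ x ∈ Q, c x = false} : Finset (α → Bool)) := by
    ext c
    simp only [monoColorings, mem_filter, mem_union, mem_univ, true_and]
    constructor
    · intro h
      cases hb : c q
      · exact Or.inr fun x hx => (h x hx q hq).trans hb
      · exact Or.inl fun x hx => (h x hx q hq).trans hb
    · rintro (h | h) x hx y hy <;> rw [h x hx, h y hy]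
  have hdisj : Disjoint ({c | ∀ x ∈ Q, c x = true} : Finset (α → Bool))
      ({c | ∀ x ∈ Q, c x = false} : Finset (α → Bool)) :=
    disjoint_filter.mpr fun c _ h₁ h₂ => by simpa using (h₁ q hq).symm.trans (h₂ q hq)
  rw [hsplit, card_union_of_disjoint hdisj, add_mul, card_filter_forall_eq_mul_two_pow,
    card_filter_forall_eq_mul_two_pow, pow_succ, mul_two]

theorem card_monoColorings_inter_mul_two_pow_le_of_disjoint {Q₁ Q₂ : Finset α}
    (h₁ : Q₁.Nonempty) (h₂ : Q₂.Nonempty) (h : Disjoint Q₁ Q₂) :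
    #(monoColorings Q₁ ∩ monoColorings Q₂) * 2 ^ (#Q₁ + #Q₂) ≤ 2 ^ (Fintype.card α + 2) := by
  obtain ⟨q₁, hq₁⟩ := h₁
  obtain ⟨q₂, hq₂⟩ := h₂
  set pattern : Bool × Bool → α → Bool := fun b x => if x ∈ Q₁ then b.1 else b.2
  have hsub : monoColorings Q₁ ∩ monoColorings Q₂
      ⊆ univ.biUnion fun b => {c | ∀ x ∈ Q₁ ∪ Q₂, c x = pattern b x} := by
    intro c hc
    simp only [monoColorings, mem_inter, mem_filter, mem_univ, true_and] at hc
    simp only [mem_biUnion, mem_univ, mem_filter, true_and, mem_union]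
    refine ⟨(c q₁, c q₂), fun x hx => ?_⟩
    by_cases hx₁ : x ∈ Q₁
    · simp only [pattern, if_pos hx₁]
      exact hc.1 x hx₁ q₁ hq₁
    · simp only [pattern, if_neg hx₁]
      exact hc.2 x (hx.resolve_left hx₁) q₂ hq₂
  calc #(monoColorings Q₁ ∩ monoColorings Q₂) * 2 ^ (#Q₁ + #Q₂)
      ≤ (∑ b : Bool × Bool, #{c : α → Bool | ∀ x ∈ Q₁ ∪ Q₂, c x = pattern b x})
          * 2 ^ #(Q₁ ∪ Q₂) := by
        rw [card_union_of_disjoint h]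
        gcongr
        exact (card_le_card hsub).trans card_biUnion_le
    _ = 2 ^ (Fintype.card α + 2) := by
        rw [sum_mul, sum_congr rfl fun b _ => card_filter_forall_eq_mul_two_pow _ _, sum_const,
          card_univ, Fintype.card_prod, Fintype.card_bool, smul_eq_mul, pow_add]
        ring

theorem monoColorings_inter_subset {Q₁ Q₂ : Finset α} {z : α} (hz : z ∈ Q₁ ∩ Q₂) :
    monoColorings Q₁ ∩ monoColorings Q₂ ⊆ monoColorings (Q₁ ∪ Q₂) := by
  intro c hc
  simp only [monoColorings, mem_inter, mem_filter, mem_univ, true_and] at hc ⊢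
  have hcz : ∀ x ∈ Q₁ ∪ Q₂, c x = c z := fun x hx =>
    (mem_union.mp hx).elim (fun hx => hc.1 x hx z (mem_inter.mp hz).1)
      fun hx => hc.2 x hx z (mem_inter.mp hz).2
  intro x hx y hy
  rw [hcz x hx, hcz y hy]

theorem card_monoColorings_inter_mul_two_pow_le {Q₁ Q₂ : Finset α} (h₁ : Q₁.Nonempty)
    (h₂ : Q₂.Nonempty) (h : #(Q₁ ∩ Q₂) ≤ 1) :
    #(monoColorings Q₁ ∩ monoColorings Q₂) * 2 ^ (#Q₁ + #Q₂) ≤ 2 ^ (Fintype.card α + 2) := by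
  rcases (Q₁ ∩ Q₂).eq_empty_or_nonempty with hemp | ⟨z, hz⟩
  · exact card_monoColorings_inter_mul_two_pow_le_of_disjoint h₁ h₂
      (disjoint_iff_inter_eq_empty.mpr hemp)
  have hcard := card_union_add_card_inter Q₁ Q₂
  calc #(monoColorings Q₁ ∩ monoColorings Q₂) * 2 ^ (#Q₁ + #Q₂)
      ≤ #(monoColorings (Q₁ ∪ Q₂)) * 2 ^ (#(Q₁ ∪ Q₂) + 1) :=
        Nat.mul_le_mul (card_le_card (monoColorings_inter_subset hz))
          (Nat.pow_le_pow_right two_pos (by omega))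
    _ = 2 ^ (Fintype.card α + 2) := by
        rw [pow_succ, ← mul_assoc, card_monoColorings_mul_two_pow (h₁.mono subset_union_left)]
        ring

end Colorings

theorem mem_AP {a d k x : ℕ} : x ∈ AP a d k ↔ ∃ i < k, a + i * d = x := by
  simp [AP]

theorem card_AP {a d k : ℕ} (hd : d ≠ 0) : #(AP a d k) = k := by
  rw [AP, card_image_of_injective _ fun i j h => Nat.eq_of_mul_eq_mul_right (Nat.pos_of_ne_zero hd)
    (Nat.add_left_cancel h), card_range]

theorem disjoint_AP_AP {a a' d k : ℕ} (ha : a < d) (ha' : a' < d) (h : a ≠ a') :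
    Disjoint (AP a d k) (AP a' d k) := by
  refine disjoint_left.mpr fun x hx hx' => h ?_
  obtain ⟨i, -, rfl⟩ := mem_AP.mp hx
  obtain ⟨i', -, hi'⟩ := mem_AP.mp hx'
  have := congrArg (· % d) hi'
  simp only [Nat.add_mul_mod_self_right, Nat.mod_eq_of_lt ha, Nat.mod_eq_of_lt ha'] at this
  exact this.symm

theorem card_AP_inter_AP_le_one {a a' d d' k : ℕ} (hdd' : d < d') (hk : (k - 1) * (d' - d) < d) :
    #(AP a d k ∩ AP a' d' k) ≤ 1 := by
  have hcommon : ∀ I J, I < k → J < k → I * d = J * d' → J = 0 := fun I J hI hJ hIJ => by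
    by_contra hJ0
    have hJI : J < I := Nat.lt_of_mul_lt_mul_right
      (hIJ ▸ Nat.mul_lt_mul_of_pos_left hdd' (Nat.pos_of_ne_zero hJ0))
    have hdiff : (I - J) * d = J * (d' - d) := by rw [Nat.sub_mul, Nat.mul_sub, hIJ]
    have h1 : d ≤ (I - J) * d := Nat.le_mul_of_pos_left d (by omega)
    have h2 : J * (d' - d) ≤ (k - 1) * (d' - d) := Nat.mul_le_mul_right _ (by omega)
    omega
  have hd : 0 < d := by omega
  rw [card_le_one]
  intro x hx y hy
  wlog hxy : x ≤ y generalizing x y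
  · exact (this y hy x hx (by omega)).symm
  obtain ⟨i, hi, rfl⟩ := mem_AP.mp (mem_inter.mp hx).1
  obtain ⟨i', hi', hx'⟩ := mem_AP.mp (mem_inter.mp hx).2
  obtain ⟨j, hj, rfl⟩ := mem_AP.mp (mem_inter.mp hy).1
  obtain ⟨j', hj', hy'⟩ := mem_AP.mp (mem_inter.mp hy).2
  have hij : i ≤ j := Nat.le_of_mul_le_mul_right (by omega) hd
  have hij' : i' ≤ j' := Nat.le_of_mul_le_mul_right (by omega) (hd.trans hdd')
  have := hcommon (j - i) (j' - i') (by omega) (by omega) (by rw [Nat.sub_mul, Nat.sub_mul]; omega)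
  obtain rfl : j' = i' := by omega
  omega

/-- Pairs `(a, d)` of start and difference. -/
def apFamily (D W : ℕ) : Finset (ℕ × ℕ) :=
  Icc 1 (D - W) ×ˢ Ioc (D - W) D

theorem isKAP_of_mem_apFamily {n k D W : ℕ} {p : ℕ × ℕ} (hp : p ∈ apFamily D W) (hk : 1 ≤ k)
    (hn : k * D ≤ n) : IsKAP n k (AP p.1 p.2 k) := by
  simp only [apFamily, mem_product, mem_Icc, mem_Ioc] at hp
  refine ⟨p.1, p.2, hp.1.1, by omega, ?_, rfl⟩
  have h1 : (k - 1) * p.2 ≤ (k - 1) * D := Nat.mul_le_mul_left _ hp.2.2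
  have h2 : (k - 1) * D = k * D - D := Nat.sub_one_mul k D
  have h3 : D ≤ k * D := Nat.le_mul_of_pos_left D hk
  omega

theorem card_AP_inter_le_one_of_mem_apFamily {k D W : ℕ} (hW : k * W ≤ D - W) {p q : ℕ × ℕ}
    (hp : p ∈ apFamily D W) (hq : q ∈ apFamily D W) (hpq : p ≠ q) :
    #(AP p.1 p.2 k ∩ AP q.1 q.2 k) ≤ 1 := by
  simp only [apFamily, mem_product, mem_Icc, mem_Ioc] at hp hq
  have hsep : ∀ {d d' : ℕ}, D - W < d → d' ≤ D → (k - 1) * (d' - d) < d := fun hd hd' =>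
    calc (k - 1) * (_ - _) ≤ k * W := Nat.mul_le_mul (Nat.sub_le k 1) (by omega)
      _ < _ := by omega
  rcases lt_trichotomy p.2 q.2 with h | h | h
  · exact card_AP_inter_AP_le_one h (hsep hp.2.1 hq.2.2)
  · have hne : p.1 ≠ q.1 := fun h' => hpq (Prod.ext h' h)
    rw [h, disjoint_iff_inter_eq_empty.mp (disjoint_AP_AP (by omega) (by omega) hne), card_empty]
    exact zero_le_one
  · rw [inter_comm]
    exact card_AP_inter_AP_le_one h (hsep hq.2.1 hp.2.2)

theorem sq_le_card_apFamily {n k : ℕ} (hk : 1 ≤ k) (hn : 2 * k ^ 2 ≤ n) :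
    n ^ 2 ≤ 32 * k ^ 3 * #(apFamily (n / k) (n / k / (2 * k))) := by
  set D := n / k
  set W := D / (2 * k)
  have hD : 2 * k ≤ D := (Nat.le_div_iff_mul_le hk).mpr (by nlinarith)
  have hW : 1 ≤ W := (Nat.le_div_iff_mul_le (by omega)).mpr (by omega)
  have hnD : n ≤ 2 * k * D := by
    have : n < k * (D + 1) := Nat.lt_mul_div_succ n (show 0 < k by omega)
    nlinarith
  have hDW : D ≤ 4 * k * W := by
    have : D < 2 * k * (W + 1) := Nat.lt_mul_div_succ D (show 0 < 2 * k by omega)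
    nlinarith
  have hWD : 2 * k * W ≤ D := Nat.mul_div_le D (2 * k)
  have hWD' : D ≤ 2 * (D - W) := by
    have : W ≤ k * W := Nat.le_mul_of_pos_left W hk
    have : 2 * k * W = 2 * (k * W) := by ring
    omega
  rw [apFamily, card_product, Nat.card_Icc, Nat.card_Ioc, Nat.add_sub_cancel,
    Nat.sub_sub_self (by omega)]
  calc n ^ 2 ≤ (2 * k * D) ^ 2 := by gcongr
    _ = 4 * k ^ 2 * (D * D) := by ring
    _ ≤ 4 * k ^ 2 * ((4 * k * W) * (2 * (D - W))) := by gcongr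
    _ = 32 * k ^ 3 * ((D - W) * W) := by ring

theorem IsKAP.subset_Icc {n k : ℕ} {P : Finset ℕ} (h : IsKAP n k P) : P ⊆ Icc 1 n := by
  obtain ⟨a, d, ha, -, hn, rfl⟩ := h
  intro x hx
  obtain ⟨i, hi, rfl⟩ := mem_AP.mp hx
  have : i * d ≤ (k - 1) * d := Nat.mul_le_mul_right d (by omega)
  exact mem_Icc.mpr ⟨by omega, by omega⟩

theorem IsKAP.card_eq {n k : ℕ} {P : Finset ℕ} (h : IsKAP n k P) : #P = k := by
  obtain ⟨a, d, -, hd, -, rfl⟩ := h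
  exact card_AP (by omega)

theorem IsKAP.card_subtype {n k : ℕ} {P : Finset ℕ} (h : IsKAP n k P) :
    #(P.subtype (· ∈ Finset.Icc 1 n)) = k := by
  rw [Finset.card_subtype, filter_true_of_mem h.subset_Icc, h.card_eq]

noncomputable def monoKAPFraction (n k : ℕ) : ℝ :=
  (Nat.card {c : ↥(Finset.Icc 1 n) → Bool // HasMonoKAP n k c} : ℝ) / 2 ^ n

theorem monoKAPFraction_le_one (n k : ℕ) : monoKAPFraction n k ≤ 1 := by
  classical
  rw [monoKAPFraction, div_le_one (by positivity), Nat.card_eq_fintype_card]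
  have := Fintype.card_subtype_le (fun c : ↥(Finset.Icc 1 n) → Bool => HasMonoKAP n k c)
  rw [Fintype.card_fun, Fintype.card_coe, Nat.card_Icc, Nat.add_sub_cancel,
    Fintype.card_bool] at this
  exact_mod_cast this

def monoColoringsIcc (n : ℕ) (P : Finset ℕ) : Finset (↥(Finset.Icc 1 n) → Bool) :=
  monoColorings (P.subtype (· ∈ Finset.Icc 1 n))

theorem mono_iff_mem_monoColoringsIcc {n : ℕ} {c : ↥(Finset.Icc 1 n) → Bool} {P : Finset ℕ} :
    Mono c P ↔ c ∈ monoColoringsIcc n P := by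
  simp only [Mono, monoColoringsIcc, monoColorings, mem_filter, mem_univ, true_and, mem_subtype]
  exact ⟨fun h x hx y hy => h x y hx hy, fun h x y hx hy => h x hx y hy⟩

theorem card_monoColoringsIcc {n k : ℕ} {P : Finset ℕ} (hP : IsKAP n k P) (hk : 1 ≤ k) :
    (#(monoColoringsIcc n P) : ℝ) = 2 / 2 ^ k * 2 ^ n := by
  have hQ := hP.card_subtype
  have h := card_monoColorings_mul_two_pow (card_pos.mp (hQ ▸ hk))
  rw [hQ, Fintype.card_coe, Nat.card_Icc, Nat.add_sub_cancel] at h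
  rw [monoColoringsIcc, div_mul_eq_mul_div, eq_div_iff (by positivity), ← pow_succ']
  exact_mod_cast h

theorem card_monoColoringsIcc_inter_le {n k : ℕ} {P P' : Finset ℕ} (hP : IsKAP n k P)
    (hP' : IsKAP n k P') (hk : 1 ≤ k) (hPP' : #(P ∩ P') ≤ 1) :
    (#(monoColoringsIcc n P ∩ monoColoringsIcc n P') : ℝ) ≤ (2 / 2 ^ k) ^ 2 * 2 ^ n := by
  have hQ := hP.card_subtype
  have hQ' := hP'.card_subtype
  have hinter : #(P.subtype (· ∈ Finset.Icc 1 n) ∩ P'.subtype (· ∈ Finset.Icc 1 n)) ≤ 1 :=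
    calc _ ≤ #((P ∩ P').subtype (· ∈ Finset.Icc 1 n)) :=
          card_le_card fun x hx => by simpa only [mem_inter, mem_subtype] using hx
      _ ≤ #(P ∩ P') := by rw [card_subtype]; exact card_filter_le _ _
      _ ≤ 1 := hPP'
  have h := card_monoColorings_inter_mul_two_pow_le (card_pos.mp (hQ ▸ hk))
    (card_pos.mp (hQ' ▸ hk)) hinter
  rw [hQ, hQ', Fintype.card_coe, Nat.card_Icc, Nat.add_sub_cancel] at h
  rw [monoColoringsIcc, monoColoringsIcc, div_pow, div_mul_eq_mul_div, le_div_iff₀ (by positivity),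
    ← pow_mul, mul_comm k 2, two_mul]
  calc _ ≤ ((2 ^ (n + 2) : ℕ) : ℝ) := by exact_mod_cast h
    _ = 2 ^ 2 * 2 ^ n := by push_cast; ring

theorem card_biUnion_monoColoringsIcc_le {ι : Type*} {n k : ℕ} (F : Finset ι)
    (P : ι → Finset ℕ) (hP : ∀ i ∈ F, IsKAP n k (P i)) :
    #(F.biUnion fun i => monoColoringsIcc n (P i))
      ≤ Nat.card {c : ↥(Finset.Icc 1 n) → Bool // HasMonoKAP n k c} := by
  classical
  rw [Nat.card_eq_fintype_card, Fintype.card_subtype]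
  refine card_le_card fun c hc => ?_
  obtain ⟨i, hi, hc⟩ := mem_biUnion.mp hc
  exact mem_filter.mpr ⟨mem_univ c, P i, hP i hi, mono_iff_mem_monoColoringsIcc.mpr hc⟩

theorem one_sub_le_monoKAPFraction {n k : ℕ} (hk : 1 ≤ k) (hn : 2 * k ^ 2 ≤ n) :
    1 - 16 * k ^ 3 * 2 ^ k / n ^ 2 ≤ monoKAPFraction n k := by
  classical
  set D := n / k
  set W := D / (2 * k)
  set F := apFamily D W
  have hkap : ∀ p ∈ F, IsKAP n k (AP p.1 p.2 k) := fun p hp =>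
    isKAP_of_mem_apFamily hp hk (Nat.mul_div_le n k)
  have hsep : k * W ≤ D - W := by
    have h1 : 2 * k * W ≤ D := Nat.mul_div_le D (2 * k)
    have h2 : W ≤ k * W := Nat.le_mul_of_pos_left W hk
    have h3 : 2 * k * W = 2 * (k * W) := by ring
    omega
  have hsize : (n : ℝ) ^ 2 ≤ 32 * k ^ 3 * #F := by exact_mod_cast sq_le_card_apFamily hk hn
  have hn0 : (0 : ℝ) < n := by exact_mod_cast (by nlinarith : 0 < n)
  have hF : F.Nonempty := card_pos.mp <| Nat.pos_of_ne_zero fun h => by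
    rw [h, Nat.cast_zero, mul_zero] at hsize
    nlinarith
  have hsecond := one_sub_one_div_le_card_biUnion_div F (fun p => monoColoringsIcc n (AP p.1 p.2 k))
    (by positivity : (0 : ℝ) < 2 ^ n) hF (by positivity : (0 : ℝ) < 2 / 2 ^ k)
    (fun p hp => card_monoColoringsIcc (hkap p hp) hk)
    fun p hp q hq hpq => card_monoColoringsIcc_inter_le (hkap p hp) (hkap q hq) hk
      (card_AP_inter_le_one_of_mem_apFamily hsep hp hq hpq)
  have hunion := card_biUnion_monoColoringsIcc_le F (fun p => AP p.1 p.2 k) hkap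
  calc 1 - 16 * k ^ 3 * 2 ^ k / n ^ 2 ≤ 1 - 1 / ((#F : ℝ) * (2 / 2 ^ k)) := by
        have hF0 : (0 : ℝ) < #F := by exact_mod_cast hF.card_pos
        gcongr 1 - ?_
        rw [div_le_div_iff₀ (by positivity) (by positivity)]
        have : (16 : ℝ) * k ^ 3 * 2 ^ k * (#F * (2 / 2 ^ k)) = 32 * k ^ 3 * #F := by
          field_simp; ring
        rw [this, one_mul]
        exact hsize
    _ ≤ (#(F.biUnion fun p => monoColoringsIcc n (AP p.1 p.2 k)) : ℝ) / 2 ^ n := hsecond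
    _ ≤ monoKAPFraction n k := by
        rw [monoKAPFraction]
        gcongr

theorem four_mul_le_two_pow {k : ℕ} (hk : 4 ≤ k) : 4 * k ≤ 2 ^ k := by
  induction k, hk using Nat.le_induction with
  | base => norm_num
  | succ k _ ih => rw [pow_succ]; omega

theorem sq_le_Nplus_sq (f : ℕ → ℝ) (k : ℕ) (hf : 0 ≤ f k) :
    2 ^ k * k ^ 3 * f k ^ 2 ≤ (Nplus f k : ℝ) ^ 2 := by
  have hpow : ∀ {x : ℝ} (m : ℕ), 0 ≤ x → (x ^ ((m : ℝ) / 2)) ^ 2 = x ^ m := fun m hx => by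
    rw [← Real.rpow_mul_natCast hx, Nat.cast_ofNat, div_mul_cancel₀ _ two_ne_zero,
      Real.rpow_natCast]
  calc 2 ^ k * k ^ 3 * f k ^ 2 = ((2 : ℝ) ^ ((k : ℝ) / 2) * (k : ℝ) ^ ((3 : ℝ) / 2) * f k) ^ 2 := by
        rw [mul_pow, mul_pow, hpow k zero_le_two, ← Nat.cast_ofNat (R := ℝ) (n := 3),
          hpow 3 k.cast_nonneg]
    _ ≤ (Nplus f k : ℝ) ^ 2 := pow_le_pow_left₀ (by positivity) (Nat.le_ceil _) 2

theorem one_sub_le_monoKAPFraction_Nplus {f : ℕ → ℝ} {k : ℕ} (hk : 4 ≤ k) (hf : 1 ≤ f k) :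
    1 - 16 / f k ^ 2 ≤ monoKAPFraction (Nplus f k) k := by
  have hN := sq_le_Nplus_sq f k (by linarith)
  have h4k : (4 * k : ℝ) ≤ 2 ^ k := by exact_mod_cast four_mul_le_two_pow hk
  have hf2 : 1 ≤ f k ^ 2 := one_le_pow₀ hf
  have hkN : 2 * k ^ 2 ≤ Nplus f k := by
    have : ((2 * k ^ 2 : ℕ) : ℝ) ^ 2 ≤ (Nplus f k : ℝ) ^ 2 :=
      calc ((2 * k ^ 2 : ℕ) : ℝ) ^ 2 = 4 * (k : ℝ) * (k : ℝ) ^ 3 := by push_cast; ring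
        _ ≤ 2 ^ k * (k : ℝ) ^ 3 * 1 := by rw [mul_one]; gcongr
        _ ≤ 2 ^ k * k ^ 3 * f k ^ 2 := by gcongr
        _ ≤ _ := hN
    exact_mod_cast (pow_le_pow_iff_left₀ (by positivity) (by positivity) two_ne_zero).mp this
  refine le_trans ?_ (one_sub_le_monoKAPFraction (by omega) hkN)
  have hN0 : (0 : ℝ) < Nplus f k := by exact_mod_cast lt_of_lt_of_le (by positivity) hkN
  gcongr 1 - ?_
  rw [div_le_div_iff₀ (by positivity) (by linarith)]
  nlinarith

/-- If `f(k) → ∞`, then the proportion of 2-colorings of `{1, ..., N⁺(k)}`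
containing a monochromatic `k`-term arithmetic progression tends to `1`. -/
theorem prob_mono_kap_tendsto_one (f : ℕ → ℝ) (hf1 : ∀ k, 1 ≤ f k)
    (hf : Filter.Tendsto f Filter.atTop Filter.atTop) :
    Filter.Tendsto
      (fun k : ℕ =>
        (Nat.card {c : ↥(Finset.Icc 1 (Nplus f k)) → Bool //
            HasMonoKAP (Nplus f k) k c} : ℝ) / 2 ^ (Nplus f k))
      Filter.atTop (nhds 1) := by
  have hlower : Filter.Tendsto (fun k => 1 - 16 / f k ^ 2) Filter.atTop (nhds 1) := by
    have hsq := (Filter.tendsto_pow_atTop two_ne_zero).comp hf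
    simpa using tendsto_const_nhds.sub (tendsto_const_nhds.div_atTop hsq)
  refine tendsto_of_tendsto_of_tendsto_of_le_of_le' hlower tendsto_const_nhds ?_
    (Filter.Eventually.of_forall fun k => monoKAPFraction_le_one (Nplus f k) k)
  filter_upwards [Filter.eventually_ge_atTop 4] with k hk
  exact one_sub_le_monoKAPFraction_Nplus hk (hf1 k)
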